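/- arXiv:1609.02083 — 2 statements merged into one kernel-verified Lean document; each statement's English description precedes it below -/
import Mathlib

section
/- Let R be a commutative ring, M an R-module, and φ: F → G a map of finite-rank free R-modules. Let I(φ) denote the ideal of maximal minors of φ. Then φ ⊗ id_M : F ⊗ M → G ⊗ M is injective if and only if the grade of I(φ) on M is at least 1, i.e., I(φ) contains an element that is a non-zerodivisor on M (in the sense of true grade). -/
/-- The ideal generated by the `k × k` minors of `M`. -/
def minorsIdeal {R : Type*} [CommRing R] {a b : ℕ}
    (M : Matrix (Fin a) (Fin b) R) (k : ℕ) : Ideal R :=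
  Ideal.span {x | ∃ (ri : Fin k → Fin a) (ci : Fin k → Fin b),
    Function.Injective ri ∧ Function.Injective ci ∧ x = (M.submatrix ri ci).det}

/-!
Both sides say that no nonzero element of `M` is killed by `I(φ)`.

Identify `(Fin m → R) ⊗ M` with `Mᵐ`. Since `adj A * A = det A • 1`, every maximal minor kills
the kernel of `φ ⊗ id`. Conversely, if all `(t+1)`-minors kill `z` but the `t`-minor on rows `ri`
and columns `ci` does not, choose a column `c₀` outside `ci`: by Laplace expansion, the signed
`t`-minors of the submatrix on rows `ri` and columns `c₀, ci`, tensored with `z`, form a nonzero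
element of the kernel. So when `φ ⊗ id` is injective, induction on `t ≤ m`, starting from the
empty minor `1`, shows that no nonzero element is killed by the `t`-minors.

For the grade, McCoy's theorem for modules: if `c₀, …, c_{N-1}` generate `I` and have no common
nonzero annihilator in `M`, then `∑ cᵢ Xⁱ` is a non-zerodivisor on `R[X] ⊗ M`. Conversely, a
non-zerodivisor in `I·R[x₁,…,x_k]` cannot kill `1 ⊗ z` unless `z = 0`.
-/

open Polynomial TensorProduct Submodule

section

variable {R M : Type*} [CommRing R] [AddCommGroup M] [Module R M]

namespace PolynomialModule

theorem coeff_smul_add_eq_of_gt {P : R[X]} {w : PolynomialModule R M} {l d : ℕ}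
    (hl : ∀ i > l, P.coeff i • w = 0) (hd : ∀ n > d, w.coeff n = 0) :
    (P • w).coeff (l + d) = P.coeff l • w.coeff d := by
  rw [smul_apply, Finset.sum_eq_single (l, d)]
  · rintro ⟨i, j⟩ hij hne
    rw [Finset.HasAntidiagonal.mem_antidiagonal] at hij
    rcases lt_trichotomy i l with hi | rfl | hi
    · rw [hd j (by omega), smul_zero]
    · exact absurd (by rw [show j = d by omega]) hne
    · exact congr($(hl i hi).coeff j)
  · simp

theorem eq_zero_of_smul_eq_zero {P : R[X]} (hP : ∀ z : M, (∀ i, P.coeff i • z = 0) → z = 0)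
    {w : PolynomialModule R M} (hw : P • w = 0) : w = 0 := by
  obtain ⟨d, hd⟩ : ∃ d, ∀ n ≥ d, w.coeff n = 0 :=
    ⟨w.coeff.support.sup id + 1, fun n hn => Finsupp.notMem_support_iff.mp fun h => by
      have := Finset.le_sup (f := id) h
      simp only [id] at this
      omega⟩
  induction d generalizing w with
  | zero => ext n; exact hd n (Nat.zero_le n)
  | succ d ih =>
    -- Once the coefficients of `P` above `l` kill `w`, `P.coeff l` kills the top coefficient
    -- of `w`, so `P.coeff l • w` has lower degree and is zero by the outer induction.
    have hcoeff : ∀ i, P.coeff i • w = 0 := by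
      refine Nat.strong_decreasing_induction ⟨P.natDegree, fun i hi => by
        rw [coeff_eq_zero_of_natDegree_lt hi, zero_smul]⟩ fun l hl => ih ?_ ?_
      · rw [smul_comm, hw, smul_zero]
      · intro n hn
        rcases hn.eq_or_lt with rfl | hn
        · change P.coeff l • w.coeff d = 0
          rw [← coeff_smul_add_eq_of_gt hl hd, hw]
          rfl
        · exact congr(P.coeff l • $(hd n hn)).trans (smul_zero _)
    ext n
    exact hP _ fun i => congr($(hcoeff i).coeff n)

end PolynomialModule

theorem Polynomial.isSMulRegular_rTensor_of_forall_coeff_smul {P : R[X]}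
    (hP : ∀ z : M, (∀ i, P.coeff i • z = 0) → z = 0) : IsSMulRegular (R[X] ⊗[R] M) P :=
  .of_injective (PolynomialModule.polynomialTensorProductLEquivPolynomialModule R M)
    (LinearEquiv.injective _) (.of_right_eq_zero_of_smul fun _ =>
      PolynomialModule.eq_zero_of_smul_eq_zero hP)

theorem AlgEquiv.isSMulRegular_rTensor_iff {A B : Type*} [CommRing A] [CommRing B] [Algebra R A]
    [Algebra R B] (e : A ≃ₐ[R] B) (a : A) :
    IsSMulRegular (A ⊗[R] M) a ↔ IsSMulRegular (B ⊗[R] M) (e a) :=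
  Equiv.isSMulRegular_congr (e := (TensorProduct.congr e.toLinearEquiv (.refl R M)).toEquiv)
    fun x => by
      induction x with
      | zero => simp
      | add x y hx hy => simp_all only [smul_add, LinearEquiv.coe_toEquiv, map_add]
      | tmul b z => simp [smul_tmul']

namespace Submodule

theorem torsionBySet_eq_bot_of_isSMulRegular {σ : Type*} {I : Ideal R}
    {a : MvPolynomial σ R} (ha : a ∈ I.map MvPolynomial.C)
    (hreg : IsSMulRegular (MvPolynomial σ R ⊗[R] M) a) : torsionBySet R M I = ⊥ := by
  refine (Submodule.eq_bot_iff _).mpr fun z hz => ?_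
  have hkill : I.map MvPolynomial.C ≤ LinearMap.ker
      (LinearMap.toSpanSingleton (MvPolynomial σ R) _ ((1 : MvPolynomial σ R) ⊗ₜ[R] z)) := by
    refine Ideal.map_le_iff_le_comap.mpr fun r hr => ?_
    rw [Ideal.mem_comap, LinearMap.mem_ker, LinearMap.toSpanSingleton_apply,
      ← MvPolynomial.algebraMap_eq, algebraMap_smul, ← tmul_smul,
      (mem_torsionBySet_iff _ _).mp hz ⟨r, hr⟩, tmul_zero]
  have h1 : (1 : MvPolynomial σ R) ⊗ₜ[R] z = 0 := hreg.right_eq_zero_of_smul (hkill ha)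
  simpa using congr(TensorProduct.lid R M ((MvPolynomial.lcoeff R 0).rTensor M $h1))

theorem exists_isSMulRegular_of_torsionBySet_eq_bot {I : Ideal R} (hI : I.FG)
    (h : torsionBySet R M I = ⊥) :
    ∃ a : MvPolynomial (Fin 1) R, a ∈ I.map MvPolynomial.C ∧
      IsSMulRegular (MvPolynomial (Fin 1) R ⊗[R] M) a := by
  obtain ⟨N, g, rfl⟩ := Submodule.fg_iff_exists_fin_generating_family.mp hI
  set P : R[X] := ∑ i : Fin N, C (g i) * X ^ (i : ℕ)
  have hcoeff (i : Fin N) : P.coeff i = g i := by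
    simp [P, Fin.val_inj]
  have hPI : P ∈ (Ideal.span (Set.range g)).map C :=
    Ideal.sum_mem _ fun i _ => Ideal.mul_mem_right _ _ <|
      Ideal.mem_map_of_mem _ <| Ideal.subset_span ⟨i, rfl⟩
  let e := MvPolynomial.uniqueAlgEquiv R (Fin 1)
  refine ⟨e.symm P, ?_, ?_⟩
  · have hmap : (Ideal.span (Set.range g)).map MvPolynomial.C =
        ((Ideal.span (Set.range g)).map C).map (e.symm : R[X] →+* MvPolynomial (Fin 1) R) := by
      rw [Ideal.map_map]
      congr 1
      exact RingHom.ext fun r => (e.symm.commutes r).symm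
    rw [hmap]
    exact Ideal.mem_map_of_mem _ hPI
  · refine (e.symm.isSMulRegular_rTensor_iff P).mp <|
      isSMulRegular_rTensor_of_forall_coeff_smul fun z hz => ?_
    rw [← Submodule.mem_bot R, ← h, ← torsionBySet_eq_torsionBySet_span, mem_torsionBySet_iff]
    rintro ⟨_, i, rfl⟩
    simpa only [hcoeff] using hz i

theorem torsionBySet_eq_bot_iff_exists_isSMulRegular {I : Ideal R} (hI : I.FG) :
    torsionBySet R M I = ⊥ ↔ ∃ (k : ℕ) (a : MvPolynomial (Fin k) R),
      a ∈ I.map MvPolynomial.C ∧ IsSMulRegular (MvPolynomial (Fin k) R ⊗[R] M) a :=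
  ⟨fun h => ⟨1, exists_isSMulRegular_of_torsionBySet_eq_bot hI h⟩,
    fun ⟨_, _, ha, hreg⟩ => torsionBySet_eq_bot_of_isSMulRegular ha hreg⟩

theorem torsionBySet_pi_tensor_eq_bot {κ : Type*} [Fintype κ] [DecidableEq κ]
    {s : Set R} (h : torsionBySet R M s = ⊥) : torsionBySet R ((κ → R) ⊗[R] M) s = ⊥ := by
  let E := TensorProduct.comm R _ M ≪≫ₗ piScalarRight R R M κ
  refine (Submodule.eq_bot_iff _).mpr fun w hw => E.map_eq_zero_iff.mp <| funext fun j => ?_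
  rw [Pi.zero_apply, ← mem_bot R, ← h, mem_torsionBySet_iff]
  intro a
  rw [← Pi.smul_apply, ← map_smul, (mem_torsionBySet_iff _ _).mp hw a, map_zero, Pi.zero_apply]

end Submodule

theorem TensorProduct.tmul_eq_zero_iff_forall_smul {κ : Type*} [Fintype κ] [DecidableEq κ]
    (v : κ → R) (z : M) : v ⊗ₜ[R] z = 0 ↔ ∀ j, v j • z = 0 := by
  rw [← (TensorProduct.comm R _ M ≪≫ₗ piScalarRight R R M κ).map_eq_zero_iff]
  simp [funext_iff]

namespace Matrix

variable {ι κ : Type*}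

theorem det_submatrix_eq_zero_of_not_injective_left [Fintype κ] [DecidableEq κ]
    {α : Type*} (A : Matrix ι α R) {f : κ → ι} (hf : ¬f.Injective) (g : κ → α) :
    (A.submatrix f g).det = 0 := by
  obtain ⟨x, y, hxy, hne⟩ := Function.not_injective_iff.mp hf
  exact det_zero_of_row_eq hne (by ext; simp [hxy])

theorem det_submatrix_eq_zero_of_not_injective_right [Fintype κ] [DecidableEq κ]
    {α : Type*} (A : Matrix α ι R) (f : κ → α) {g : κ → ι} (hg : ¬g.Injective) :
    (A.submatrix f g).det = 0 := by
  obtain ⟨x, y, hxy, hne⟩ := Function.not_injective_iff.mp hg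
  exact det_zero_of_column_eq hne (by simp [hxy])

theorem det_submatrix_cons {t : ℕ} (φ : Matrix ι κ R) (i : ι) (ri : Fin t → ι)
    (ci : Fin (t + 1) → κ) :
    (φ.submatrix (Fin.cons i ri) ci).det =
      ∑ j, φ i (ci j) * ((-1) ^ (j : ℕ) * (φ.submatrix ri (ci ∘ j.succAbove)).det) := by
  rw [det_succ_row_zero]
  refine Finset.sum_congr rfl fun j _ => ?_
  simp only [submatrix_apply, Fin.cons_zero, submatrix_submatrix, Fin.cons_comp_succ]
  ring

variable [Fintype ι] [DecidableEq ι] [Fintype κ] [DecidableEq κ]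

theorem det_submatrix_smul_eq_zero_of_rTensor_eq_zero (φ : Matrix ι κ R)
    {w : (κ → R) ⊗[R] M} (hw : φ.mulVecLin.rTensor M w = 0) (ri : κ → ι) (ci : κ → κ) :
    (φ.submatrix ri ci).det • w = 0 := by
  set S := (1 : Matrix ι ι R).submatrix ri id
  have hS : S * φ = φ.submatrix ri id := by ext; simp [S, mul_apply, one_apply]
  have hrows : (φ.submatrix ri id).det • w = 0 := by
    have := congr(((φ.submatrix ri id).adjugate * S).mulVecLin.rTensor M $hw)
    have hsmul : ((φ.submatrix ri id).det • (1 : Matrix κ κ R)).mulVecLin =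
        (φ.submatrix ri id).det • LinearMap.id := by
      ext; simp
    rwa [← LinearMap.rTensor_comp_apply, ← mulVecLin_mul, Matrix.mul_assoc, hS, adjugate_mul,
      hsmul, LinearMap.rTensor_smul, LinearMap.rTensor_id, map_zero] at this
  have hcols : φ.submatrix ri ci = φ.submatrix ri id * (1 : Matrix κ κ R).submatrix id ci := by
    ext; simp [mul_apply, one_apply]
  rw [hcols, det_mul, mul_comm, mul_smul, hrows, smul_zero]

theorem det_submatrix_smul_eq_zero_of_forall_succ (φ : Matrix ι κ R)
    (hφ : Function.Injective (φ.mulVecLin.rTensor M)) {t : ℕ} (ht : t < Fintype.card κ)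
    {z : M} (hz : ∀ (ri : Fin (t + 1) → ι) (ci : Fin (t + 1) → κ),
      (φ.submatrix ri ci).det • z = 0) (ri : Fin t → ι) (ci : Fin t → κ) :
    (φ.submatrix ri ci).det • z = 0 := by
  obtain ⟨c₀, hc₀⟩ : ∃ c₀, c₀ ∉ Set.range ci := by
    by_contra! h
    have := Fintype.card_le_of_surjective ci h
    simp only [Fintype.card_fin] at this
    omega
  set ci' : Fin (t + 1) → κ := Fin.cons c₀ ci
  -- The signed maximal minors of the `t × (t+1)` matrix on rows `ri` and columns `ci'`.
  set v : κ → R :=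
    ∑ j, Pi.single (ci' j) ((-1) ^ (j : ℕ) * (φ.submatrix ri (ci' ∘ j.succAbove)).det)
  have hv : φ *ᵥ v = fun i => (φ.submatrix (Fin.cons i ri) ci').det := by
    ext i
    simp [v, mulVec_sum, mulVec_single, det_submatrix_cons]
  have hvz : v ⊗ₜ[R] z = 0 := hφ <| by
    rw [LinearMap.rTensor_tmul, map_zero, mulVecLin_apply, hv, tmul_eq_zero_iff_forall_smul]
    exact fun i => hz _ _
  have hv₀ : v c₀ = (φ.submatrix ri ci).det := by
    have hne (x : Fin t) : c₀ ≠ ci x := fun h => hc₀ ⟨x, h.symm⟩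
    simp [v, ci', Fin.sum_univ_succ, hne]
  rw [← hv₀]
  exact (tmul_eq_zero_iff_forall_smul v z).mp hvz c₀

end Matrix

section minorsIdeal

variable {a b : ℕ} (φ : Matrix (Fin a) (Fin b) R)

theorem minorsIdeal_eq_span_range (k : ℕ) :
    minorsIdeal φ k = Ideal.span (Set.range fun p : (Fin k → Fin a) × (Fin k → Fin b) =>
      (φ.submatrix p.1 p.2).det) := by
  refine le_antisymm (Ideal.span_mono ?_) (Ideal.span_le.mpr ?_)
  · rintro _ ⟨ri, ci, -, -, rfl⟩
    exact ⟨(ri, ci), rfl⟩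
  · rintro _ ⟨⟨ri, ci⟩, rfl⟩
    by_cases hri : ri.Injective
    · by_cases hci : ci.Injective
      · exact Ideal.subset_span ⟨ri, ci, hri, hci, rfl⟩
      · simp [Matrix.det_submatrix_eq_zero_of_not_injective_right φ ri hci]
    · simp [Matrix.det_submatrix_eq_zero_of_not_injective_left φ hri ci]

theorem minorsIdeal_fg (k : ℕ) : (minorsIdeal φ k).FG := by
  rw [minorsIdeal_eq_span_range]
  exact fg_span (Set.finite_range _)

theorem mem_torsionBySet_minorsIdeal_iff {k : ℕ} {z : M} :
    z ∈ torsionBySet R M (minorsIdeal φ k) ↔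
      ∀ (ri : Fin k → Fin a) (ci : Fin k → Fin b), (φ.submatrix ri ci).det • z = 0 := by
  rw [minorsIdeal_eq_span_range, ← torsionBySet_eq_torsionBySet_span, mem_torsionBySet_iff]
  simp only [Subtype.forall, Set.forall_mem_range, Prod.forall]

theorem torsionBySet_minorsIdeal_eq_bot_of_injective
    (hφ : Function.Injective (φ.mulVecLin.rTensor M)) :
    ∀ t ≤ b, torsionBySet R M (minorsIdeal φ t) = ⊥ := by
  intro t ht
  refine (Submodule.eq_bot_iff _).mpr fun z hz => ?_
  rw [mem_torsionBySet_minorsIdeal_iff] at hz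
  induction t with
  | zero => simpa using hz Fin.elim0 Fin.elim0
  | succ t ih =>
    refine ih (by omega) fun ri ci => ?_
    exact φ.det_submatrix_smul_eq_zero_of_forall_succ hφ (by simpa using ht) hz ri ci

theorem injective_rTensor_of_torsionBySet_eq_bot
    (h : torsionBySet R M (minorsIdeal φ b) = ⊥) :
    Function.Injective (φ.mulVecLin.rTensor M) := by
  refine (injective_iff_map_eq_zero _).mpr fun w hw => ?_
  have hw' : w ∈ torsionBySet R ((Fin b → R) ⊗[R] M) (minorsIdeal φ b) :=
    (mem_torsionBySet_minorsIdeal_iff φ).mpr (φ.det_submatrix_smul_eq_zero_of_rTensor_eq_zero hw)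
  rwa [torsionBySet_pi_tensor_eq_bot h, mem_bot] at hw'

end minorsIdeal

end

theorem injective_tensor_iff_trueGrade_ge_one_general
    {R : Type*} [CommRing R] (M : Type*) [AddCommGroup M] [Module R M]
    (m n : ℕ) (φ : Matrix (Fin n) (Fin m) R) :
    Function.Injective (LinearMap.rTensor M (Matrix.mulVecLin φ)) ↔
      ∃ (k : ℕ) (a : MvPolynomial (Fin k) R),
        a ∈ Ideal.map (MvPolynomial.C (σ := Fin k) (R := R)) (minorsIdeal φ m) ∧
        IsSMulRegular (TensorProduct R (MvPolynomial (Fin k) R) M) a := by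
  rw [← torsionBySet_eq_bot_iff_exists_isSMulRegular (minorsIdeal_fg φ m)]
  exact ⟨fun h => torsionBySet_minorsIdeal_eq_bot_of_injective φ h m le_rfl,
    injective_rTensor_of_torsionBySet_eq_bot φ⟩

theorem injective_tensor_iff_trueGrade_ge_one
    {R : Type*} [CommRing R] (M : Type*) [AddCommGroup M] [Module R M]
    (m n : ℕ) (hmn : m ≤ n) (φ : Matrix (Fin n) (Fin m) R) :
    Function.Injective (LinearMap.rTensor M (Matrix.mulVecLin φ)) ↔
      ∃ (k : ℕ) (a : MvPolynomial (Fin k) R),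
        a ∈ Ideal.map (MvPolynomial.C (σ := Fin k) (R := R)) (minorsIdeal φ m) ∧
        IsSMulRegular (TensorProduct R (MvPolynomial (Fin k) R) M) a :=
  injective_tensor_iff_trueGrade_ge_one_general M m n φ
end

section
/- Let T_{p,q,r} (with p,q,r ≥ 2) be the tree with three arms of lengths p-1, q-1, r-1 attached to a central vertex, with n = p+q+r-2 vertices, and let A(T_{p,q,r}) be its generalized Cartan matrix (A_{ii} = 2, A_{ij} = -1 if i and j are adjacent, A_{ij} = 0 otherwise). Then the quadratic form associated to A(T_{p,q,r}) is positive definite if and only if 1/p + 1/q + 1/r > 1. -/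
/-- Adjacency (as a `Bool`) of the tree `T_{p,q,r}`, whose vertices are indexed by
`0, 1, …, p+q+r-3`:  vertex `0` is the central vertex `u`; vertices `1, …, p-1`
form the first arm `x₁, …, x_{p-1}`; vertices `p, …, p+q-2` form the second arm
`y₁, …, y_{q-1}`; vertices `p+q-1, …, p+q+r-3` form the third arm `z₁, …, z_{r-1}`. -/
def tpqrAdjAux (p q r i j : ℕ) : Bool :=
  ((i == 0) && ((j == 1) || (j == p) || (j == p + q - 1))) ||
  ((1 ≤ i) && (i ≤ p - 2) && (j == i + 1)) ||
  ((p ≤ i) && (i ≤ p + q - 3) && (j == i + 1)) ||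
  ((p + q - 1 ≤ i) && (i ≤ p + q + r - 4) && (j == i + 1))

/-- Symmetrized adjacency of `T_{p,q,r}`. -/
def tpqrAdj (p q r i j : ℕ) : Bool :=
  tpqrAdjAux p q r i j || tpqrAdjAux p q r j i

/-- The generalized Cartan matrix `A(T_{p,q,r})`: `2` on the diagonal, `-1` between
adjacent vertices of the tree `T_{p,q,r}`, and `0` otherwise. -/
def cartanT (p q r : ℕ) : Matrix (Fin (p + q + r - 2)) (Fin (p + q + r - 2)) ℤ :=
  fun i j => if i = j then 2 else if tpqrAdj p q r i j then -1 else 0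

/-!
Along an arm `x₀, x₁, …, x_m` (with `x₀` the centre), completing squares gives
`∑_{k<m} (2 x_{k+1}² - 2 x_k x_{k+1}) = (sum of squares) - m/(m+1) x₀²`, and the squares
all vanish exactly when the arm is linear, `x_k = (1 - k/(m+1)) x₀`. Adding `2 x₀²` and the
three arms of lengths `p - 1, q - 1, r - 1`, the form is a sum of squares plus
`(1/p + 1/q + 1/r - 1) x₀²`. If the coefficient is positive, a vector on which the form is
nonpositive has `x₀ = 0` and linear, hence zero, arms. Otherwise the vector that is `1` at the
centre and linear on each arm, vanishing one step past each tip, has value equal to the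
coefficient.
-/

open Finset

/-- The contribution of an arm to the form, `x 0` being the centre and `x 1, …, x m` the arm. -/
def armForm (m : ℕ) (x : ℕ → ℝ) : ℝ :=
  ∑ k ∈ range m, (2 * x (k + 1) ^ 2 - 2 * x k * x (k + 1))

noncomputable def armDefect (m : ℕ) (x : ℕ → ℝ) : ℝ :=
  armForm m x + m / (m + 1) * x 0 ^ 2

lemma armForm_succ (m : ℕ) (x : ℕ → ℝ) :
    armForm (m + 1) x = 2 * x 1 ^ 2 - 2 * x 0 * x 1 + armForm m (fun k => x (k + 1)) := by
  rw [armForm, sum_range_succ', armForm]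
  ring

lemma armDefect_succ (m : ℕ) (x : ℕ → ℝ) :
    armDefect (m + 1) x =
      (m + 2) / (m + 1) * (x 1 - (m + 1) / (m + 2) * x 0) ^ 2 +
        armDefect m (fun k => x (k + 1)) := by
  simp only [armDefect, armForm_succ]
  push_cast
  field_simp
  ring

lemma armDefect_nonneg (m : ℕ) (x : ℕ → ℝ) : 0 ≤ armDefect m x := by
  induction m generalizing x with
  | zero => simp [armDefect, armForm]
  | succ m ih =>
    rw [armDefect_succ]
    exact add_nonneg (by positivity) (ih _)

lemma armDefect_eq_zero_iff (m : ℕ) (x : ℕ → ℝ) :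
    armDefect m x = 0 ↔ ∀ k ≤ m, x k = (1 - k / (m + 1)) * x 0 := by
  induction m generalizing x with
  | zero => simp [armDefect, armForm]
  | succ m ih =>
    rw [armDefect_succ, add_eq_zero_iff_of_nonneg (by positivity) (armDefect_nonneg _ _), ih,
      mul_eq_zero, or_iff_right (by positivity), sq_eq_zero_iff, sub_eq_zero]
    push_cast
    constructor
    · rintro ⟨h₁, h⟩ (_ | k) hk
      · simp
      · rw [h k (by omega), h₁]
        push_cast
        field_simp
        ring
    · intro h
      have h₁ := h 1 (by omega)
      refine ⟨by rw [h₁]; field_simp; ring, fun k hk => ?_⟩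
      rw [h (k + 1) (by omega), h₁]
      push_cast
      field_simp
      ring

lemma armDefect_eq_zero_of_eq_one_sub (m : ℕ) (x : ℕ → ℝ)
    (hx : ∀ k ≤ m, x k = 1 - k / (m + 1)) :
    armDefect m x = 0 :=
  (armDefect_eq_zero_iff m x).2 fun k hk => by simp [hx k hk, hx 0 (Nat.zero_le m)]

lemma sum_sum_cartanForm_eq_of_lt {α : Type*} [CommRing α] (n : ℕ) (E : ℕ → ℕ → Bool)
    (hE : ∀ i < n, ∀ j < n, E i j = true → i < j) (w : ℕ → α) :
    ∑ i ∈ range n, ∑ j ∈ range n,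
        w i * (if i = j then 2 else if (E i j || E j i) then -1 else 0) * w j =
      2 * ∑ i ∈ range n, w i ^ 2 -
        2 * ∑ i ∈ range n, ∑ j ∈ range n, if E i j then w i * w j else 0 := by
  have entry : ∀ i ∈ range n, ∀ j ∈ range n,
      w i * (if i = j then 2 else if (E i j || E j i) then -1 else 0) * w j =
        (if i = j then 2 * w i ^ 2 else 0) - (if E i j then w i * w j else 0) -
          (if E j i then w j * w i else 0) := by
    intro i hi j hj
    rw [mem_range] at hi hj
    by_cases hij : i = j
    · subst hij
      have : E i i = false := by simpa using mt (hE i hi i hi) (lt_irrefl i)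
      simp only [↓reduceIte, this, Bool.false_eq_true, sub_zero]
      ring
    · cases hji : E j i <;> cases hij' : E i j
      · simp [hij]
      · simp [hij]
      · simp [hij, mul_comm]
      · exact absurd ((hE i hi j hj hij').trans (hE j hj i hi hji)) (lt_irrefl i)
  rw [sum_congr rfl fun i hi => sum_congr rfl fun j hj => entry i hi j hj]
  simp only [sum_sub_distrib, sum_ite_eq, sum_ite_mem, inter_self]
  rw [sum_comm (f := fun i j => if E j i = true then w j * w i else 0), mul_sum]
  ring

lemma sum_sum_ite_eq_sum_Ico_parent {M : Type*} [AddCommMonoid M] (n : ℕ)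
    (E : ℕ → ℕ → Bool) (par : ℕ → ℕ)
    (hE : ∀ i < n, ∀ j < n, E i j = true ↔ 0 < j ∧ i = par j)
    (hpar : ∀ j, 0 < j → par j < j) (f : ℕ → ℕ → M) :
    ∑ i ∈ range n, ∑ j ∈ range n, (if E i j then f i j else 0) =
      ∑ j ∈ Ico 1 n, f (par j) j := by
  rw [sum_comm]
  have column : ∀ j ∈ range n,
      ∑ i ∈ range n, (if E i j then f i j else 0) = if 0 < j then f (par j) j else 0 := by
    intro j hj
    rw [mem_range] at hj
    rw [sum_congr rfl fun i hi => if_congr (hE i (mem_range.1 hi) j hj) rfl rfl]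
    split_ifs with h
    · simp [h, sum_ite_eq', (hpar j h).trans hj]
    · simp [h]
  rw [sum_congr rfl column, ← sum_filter]
  congr 1
  ext j
  simp only [mem_filter, mem_range, mem_Ico]
  omega

/-- The vertices of the arm occupying the indices `lo, lo + 1, …`, listed outward from the
centre `0`. -/
def armVertex (lo : ℕ) : ℕ → ℕ
  | 0 => 0
  | k + 1 => lo + k

lemma sum_Ico_eq_armForm (w : ℕ → ℝ) (par : ℕ → ℕ) (lo hi : ℕ)
    (hpar : ∀ k < hi - lo, par (lo + k) = armVertex lo k) :
    ∑ j ∈ Ico lo hi, (2 * w j ^ 2 - 2 * w (par j) * w j) =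
      armForm (hi - lo) (w ∘ armVertex lo) := by
  rw [sum_Ico_eq_sum_range, armForm]
  refine sum_congr rfl fun k hk => ?_
  rw [hpar k (mem_range.1 hk)]
  rfl

def tpqrParent (p q j : ℕ) : ℕ :=
  if j = 1 ∨ j = p ∨ j = p + q - 1 then 0 else j - 1

lemma tpqrParent_lt {p q j : ℕ} (hj : 0 < j) : tpqrParent p q j < j := by
  unfold tpqrParent
  split_ifs <;> omega

lemma tpqrAdjAux_iff {p q r i j : ℕ} (hp : 2 ≤ p) (hq : 2 ≤ q) (hj : j < p + q + r - 2) :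
    tpqrAdjAux p q r i j = true ↔ 0 < j ∧ i = tpqrParent p q j := by
  unfold tpqrAdjAux tpqrParent
  simp only [Bool.or_eq_true, Bool.and_eq_true, beq_iff_eq, decide_eq_true_eq]
  split_ifs <;> omega

lemma cast_cartanT_apply (p q r : ℕ) (i j : Fin (p + q + r - 2)) :
    ((cartanT p q r i j : ℤ) : ℝ) =
      if (i : ℕ) = j then 2
      else if (tpqrAdjAux p q r i j || tpqrAdjAux p q r j i) then -1 else 0 := by
  unfold cartanT tpqrAdj
  simp only [Fin.val_inj]
  split_ifs <;> norm_num

lemma sum_fin_sum_fin {M : Type*} [AddCommMonoid M] (n : ℕ) (g : ℕ → ℕ → M) :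
    ∑ i : Fin n, ∑ j : Fin n, g i j = ∑ i ∈ range n, ∑ j ∈ range n, g i j := by
  rw [← Fin.sum_univ_eq_sum_range]
  exact sum_congr rfl fun i _ => Fin.sum_univ_eq_sum_range (g i) n

lemma cartanT_form_eq_armForm (a b c : ℕ) (w : ℕ → ℝ) :
    ∑ i : Fin (a + 2 + (b + 2) + (c + 2) - 2), ∑ j,
        w i * ((cartanT (a + 2) (b + 2) (c + 2) i j : ℤ) : ℝ) * w j =
      2 * w 0 ^ 2 + armForm (a + 1) (w ∘ armVertex 1) +
        armForm (b + 1) (w ∘ armVertex (a + 2)) +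
        armForm (c + 1) (w ∘ armVertex (a + b + 3)) := by
  obtain ⟨n, hn⟩ : ∃ n, a + 2 + (b + 2) + (c + 2) - 2 = n := ⟨_, rfl⟩
  set E := tpqrAdjAux (a + 2) (b + 2) (c + 2)
  set par := tpqrParent (a + 2) (b + 2)
  have hE : ∀ i < n, ∀ j < n, E i j = true ↔ 0 < j ∧ i = par j :=
    fun i _ j hj => tpqrAdjAux_iff (by omega) (by omega) (by omega)
  have hE_lt : ∀ i < n, ∀ j < n, E i j = true → i < j := fun i hi j hj hij =>
    ((hE i hi j hj).1 hij).2 ▸ tpqrParent_lt ((hE i hi j hj).1 hij).1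
  have split (f : ℕ → ℝ) : ∑ j ∈ Ico 1 n, f j =
      ∑ j ∈ Ico 1 (a + 2), f j + ∑ j ∈ Ico (a + 2) (a + b + 3), f j +
        ∑ j ∈ Ico (a + b + 3) n, f j := by
    rw [sum_Ico_consecutive, sum_Ico_consecutive] <;> omega
  have arm (lo hi : ℕ) := sum_Ico_eq_armForm w par lo hi
  calc _ = ∑ i ∈ range n, ∑ j ∈ range n,
        w i * (if i = j then 2 else if (E i j || E j i) then -1 else 0) * w j := by
        simp only [cast_cartanT_apply]
        rw [← hn]
        exact sum_fin_sum_fin _ fun i j => w i * (if i = j then 2 else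
          if (E i j || E j i) then -1 else 0) * w j
    _ = 2 * ∑ i ∈ range n, w i ^ 2 - 2 * ∑ j ∈ Ico 1 n, w (par j) * w j := by
        rw [sum_sum_cartanForm_eq_of_lt n E hE_lt,
          sum_sum_ite_eq_sum_Ico_parent n E par hE (fun _ => tpqrParent_lt) fun i j => w i * w j]
    _ = 2 * w 0 ^ 2 + ∑ j ∈ Ico 1 n, (2 * w j ^ 2 - 2 * w (par j) * w j) := by
        rw [range_eq_Ico, sum_eq_sum_Ico_succ_bot (by omega), zero_add, sum_sub_distrib]
        simp only [mul_assoc, ← mul_sum]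
        ring
    _ = _ := by
        rw [split, arm 1 (a + 2) ?_, arm (a + 2) (a + b + 3) ?_, arm (a + b + 3) n ?_,
          show a + 2 - 1 = a + 1 by omega, show a + b + 3 - (a + 2) = b + 1 by omega,
          show n - (a + b + 3) = c + 1 by omega]
        · ring
        all_goals
          intro k hk
          cases k <;> simp only [armVertex, par] <;> unfold tpqrParent <;> split_ifs <;> omega

lemma cartanT_form_eq_armDefect (a b c : ℕ) (w : ℕ → ℝ) :
    ∑ i : Fin (a + 2 + (b + 2) + (c + 2) - 2), ∑ j,
        w i * ((cartanT (a + 2) (b + 2) (c + 2) i j : ℤ) : ℝ) * w j =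
      armDefect (a + 1) (w ∘ armVertex 1) + armDefect (b + 1) (w ∘ armVertex (a + 2)) +
        armDefect (c + 1) (w ∘ armVertex (a + b + 3)) +
        (1 / (a + 2) + 1 / (b + 2) + 1 / (c + 2) - 1) * w 0 ^ 2 := by
  rw [cartanT_form_eq_armForm]
  simp only [armDefect, Function.comp_apply, armVertex]
  push_cast
  field_simp
  ring

noncomputable def tpqrTestVector (a b c : ℕ) (i : ℕ) : ℝ :=
  if i < a + 2 then 1 - i / (a + 2)
  else if i < a + b + 3 then 1 - (i - (a + 1) : ℕ) / (b + 2)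
  else 1 - (i - (a + b + 2) : ℕ) / (c + 2)

lemma armDefect_tpqrTestVector (a b c : ℕ) :
    armDefect (a + 1) (tpqrTestVector a b c ∘ armVertex 1) = 0 ∧
      armDefect (b + 1) (tpqrTestVector a b c ∘ armVertex (a + 2)) = 0 ∧
      armDefect (c + 1) (tpqrTestVector a b c ∘ armVertex (a + b + 3)) = 0 := by
  refine ⟨?_, ?_, ?_⟩ <;> refine armDefect_eq_zero_of_eq_one_sub _ _ ?_ <;>
    rintro (_ | k) hk <;> dsimp only [Function.comp_apply, armVertex] <;> unfold tpqrTestVector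
  · simp
  · rw [if_pos (by omega)]
    push_cast
    ring
  · simp
  · rw [if_neg (by omega), if_pos (by omega), show a + 2 + k - (a + 1) = k + 1 by omega]
    push_cast
    ring
  · simp
  · rw [if_neg (by omega), if_neg (by omega), show a + b + 3 + k - (a + b + 2) = k + 1 by omega]
    push_cast
    ring

lemma eq_zero_of_armVertex_eq_zero {a b c : ℕ} {w : ℕ → ℝ}
    (h₁ : ∀ k ≤ a + 1, w (armVertex 1 k) = 0)
    (h₂ : ∀ k ≤ b + 1, w (armVertex (a + 2) k) = 0)
    (h₃ : ∀ k ≤ c + 1, w (armVertex (a + b + 3) k) = 0) {i : ℕ} (hi : i < a + b + c + 4) :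
    w i = 0 := by
  rcases i with _ | i
  · exact h₁ 0 (by omega)
  by_cases hia : i ≤ a
  · simpa [armVertex, add_comm] using h₁ (i + 1) (by omega)
  by_cases hib : i ≤ a + b + 1
  · simpa [armVertex, show a + 2 + (i - (a + 1)) = i + 1 by omega] using
      h₂ (i - (a + 1) + 1) (by omega)
  · simpa [armVertex, show a + b + 3 + (i - (a + b + 2)) = i + 1 by omega] using
      h₃ (i - (a + b + 2) + 1) (by omega)

theorem cartanT_posDef_iff (p q r : ℕ) (hp : 2 ≤ p) (hq : 2 ≤ q) (hr : 2 ≤ r) :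
    (∀ v : Fin (p + q + r - 2) → ℝ, v ≠ 0 →
      0 < ∑ i, ∑ j, v i * ((cartanT p q r i j : ℤ) : ℝ) * v j) ↔
    1 < (1 : ℝ) / p + 1 / q + 1 / r := by
  obtain ⟨a, rfl⟩ := Nat.exists_eq_add_of_le' hp
  obtain ⟨b, rfl⟩ := Nat.exists_eq_add_of_le' hq
  obtain ⟨c, rfl⟩ := Nat.exists_eq_add_of_le' hr
  rw [← sub_pos]
  push_cast
  constructor
  · intro hpos
    have h₀ : tpqrTestVector a b c 0 = 1 := by simp [tpqrTestVector]
    have hne : (fun i : Fin (a + 2 + (b + 2) + (c + 2) - 2) => tpqrTestVector a b c i) ≠ 0 :=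
      fun h => by simpa [h₀] using congrFun h ⟨0, by omega⟩
    obtain ⟨h₁, h₂, h₃⟩ := armDefect_tpqrTestVector a b c
    simpa [cartanT_form_eq_armDefect, h₁, h₂, h₃, h₀] using hpos _ hne
  · intro hκ v hv
    set w : ℕ → ℝ := fun k =>
      if h : k < a + 2 + (b + 2) + (c + 2) - 2 then v ⟨k, h⟩ else 0
    have hvw : v = fun i : Fin (a + 2 + (b + 2) + (c + 2) - 2) => w i := funext fun i => by simp [w]
    rw [hvw, cartanT_form_eq_armDefect]
    by_contra! hle
    have d₁ := armDefect_nonneg (a + 1) (w ∘ armVertex 1)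
    have d₂ := armDefect_nonneg (b + 1) (w ∘ armVertex (a + 2))
    have d₃ := armDefect_nonneg (c + 1) (w ∘ armVertex (a + b + 3))
    have hw₀ : w 0 = 0 :=
      pow_eq_zero_iff two_ne_zero |>.1 (le_antisymm (by nlinarith) (sq_nonneg _))
    rw [hw₀] at hle
    have arm_zero {m lo : ℕ} (h : armDefect m (w ∘ armVertex lo) = 0) (k : ℕ) (hk : k ≤ m) :
        w (armVertex lo k) = 0 := by
      simpa [hw₀, armVertex] using (armDefect_eq_zero_iff _ _).1 h k hk
    refine hv (hvw.trans (funext fun i => eq_zero_of_armVertex_eq_zero (arm_zero ?_) (arm_zero ?_)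
      (arm_zero ?_) (by omega : (i : ℕ) < a + b + c + 4))) <;> linarith
end
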